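/- Let R be an integral domain, A a unital R-algebra with involution *, and J a *-invariant two-sided ideal of A which is a cellular ideal. If the quotient algebra H = A/J is cellular with respect to the induced involution, then A is cellular; a cell datum for A is obtained by taking Λ = Λ_J ⊔ Λ_H ordered so that every element of Λ_J is greater than every element of Λ_H (extending the original partial orders), with cellular basis the union of the cellular basis of J and arbitrary lifts to A of the cellular basis elements of H. -/

import Mathlib

/-- An R-linear algebra involution (anti-automorphism of order 2). -/
def IsInvolution (R A : Type*) [CommRing R] [Ring A] [Algebra R A]
    (σ : A →ₗ[R] A) : Prop :=
  (∀ a b : A, σ (a * b) = σ b * σ a) ∧ (∀ a : A, σ (σ a) = a) ∧ σ 1 = 1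

/-- The span Ă^λ of the basis elements c^μ_{s,t} with μ > λ. -/
def breve (R : Type*) {A : Type*} [CommRing R] [Ring A] [Algebra R A]
    {Λ : Type*} [PartialOrder Λ] {T : Λ → Type*}
    (c : ∀ l, T l → T l → A) (l : Λ) : Submodule R A :=
  Submodule.span R {x | ∃ m s t, l < m ∧ x = c m s t}

/-- Graham–Lehrer cell datum (in the weakened form): the c^λ_{s,t} are an R-basis,
left multiplication is upper-triangular with coefficients independent of t, and the
involution σ sends c^λ_{s,t} to c^λ_{t,s} modulo Ă^λ. -/
def IsCellDatum (R A : Type*) [CommRing R] [Ring A] [Algebra R A]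
    (σ : A →ₗ[R] A) (Λ : Type*) [PartialOrder Λ] (T : Λ → Type*)
    (ft : ∀ l, Fintype (T l)) (c : ∀ l, T l → T l → A) : Prop :=
  LinearIndependent R (fun p : Σ l : Λ, T l × T l => c p.1 p.2.1 p.2.2) ∧
  Submodule.span R (Set.range fun p : Σ l : Λ, T l × T l => c p.1 p.2.1 p.2.2) = ⊤ ∧
  (∀ (l : Λ) (s : T l) (a : A), ∃ rc : T l → R, ∀ t : T l,
    (a * c l s t - (letI := ft l; ∑ v : T l, rc v • c l v t)) ∈ breve R c l) ∧
  (∀ (l : Λ) (s t : T l), σ (c l s t) - c l t s ∈ breve R c l)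

/-- A cellular ideal: a *-invariant ideal J with cell-datum-like data whose basis spans J,
where the multiplication condition holds for all a ∈ A (not just a ∈ J). -/
def IsCellularIdealDatum (R A : Type*) [CommRing R] [Ring A] [Algebra R A]
    (σ : A →ₗ[R] A) (J : Submodule R A) (Λ : Type*) [PartialOrder Λ] (T : Λ → Type*)
    (ft : ∀ l, Fintype (T l)) (c : ∀ l, T l → T l → A) : Prop :=
  LinearIndependent R (fun p : Σ l : Λ, T l × T l => c p.1 p.2.1 p.2.2) ∧
  Submodule.span R (Set.range fun p : Σ l : Λ, T l × T l => c p.1 p.2.1 p.2.2) = J ∧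
  (∀ (l : Λ) (s : T l) (a : A), ∃ rc : T l → R, ∀ t : T l,
    (a * c l s t - (letI := ft l; ∑ v : T l, rc v • c l v t)) ∈ breve R c l) ∧
  (∀ (l : Λ) (s t : T l), σ (c l s t) - c l t s ∈ breve R c l)

/-- The partial order on ΛJ ⊕ ΛH extending the two orders, in which every element of ΛJ
is greater than every element of ΛH. -/
def sumPO (ΛJ ΛH : Type*) [PartialOrder ΛJ] [PartialOrder ΛH] :
    PartialOrder (ΛJ ⊕ ΛH) where
  le x y := match x, y with
    | .inl a, .inl b => a ≤ b
    | .inr a, .inr b => a ≤ b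
    | .inr _, .inl _ => True
    | .inl _, .inr _ => False
  lt x y := (match x, y with
    | .inl a, .inl b => a ≤ b
    | .inr a, .inr b => a ≤ b
    | .inr _, .inl _ => True
    | .inl _, .inr _ => False) ∧ ¬ (match y, x with
    | .inl a, .inl b => a ≤ b
    | .inr a, .inr b => a ≤ b
    | .inr _, .inl _ => True
    | .inl _, .inr _ => False)
  lt_iff_le_not_ge _ _ := Iff.rfl
  le_refl x := by cases x <;> simp
  le_trans x y z hxy hyz := by
    cases x <;> cases y <;> cases z <;> simp_all <;> exact le_trans hxy hyz
  le_antisymm x y hxy hyx := by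
    cases x <;> cases y <;> simp_all
    · exact le_antisymm hxy hyx
    · exact le_antisymm hxy hyx

universe w

/-! The lifts of the cellular basis of `H` are linearly independent modulo `J` and, together with
the cellular basis of `J`, span `A`. Since `J` lies in `Ă^λ` for every `λ ∈ Λ_H`, the cellular
conditions at such `λ` may be checked after applying `π`, where they are those of `H`; at
`λ ∈ Λ_J` they are those of the cellular ideal `J`. -/

open Submodule Set

section SumSpan

variable {R M N ι κ : Type*} [CommRing R] [AddCommGroup M] [Module R M] [AddCommGroup N]
  [Module R N] (f : M →ₗ[R] N) {v : ι → M} {w : κ → M}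

theorem LinearIndependent.sum_elim_of_span_eq_ker (hv : LinearIndependent R v)
    (hvker : span R (range v) = LinearMap.ker f) (hw : LinearIndependent R (f ∘ w)) :
    LinearIndependent R (Sum.elim v w) :=
  hv.sum_type (hw.of_comp f) (hvker ▸ (range_ker_disjoint hw).symm)

theorem span_range_sum_elim_eq_top_of_span_eq_ker (hvker : span R (range v) = LinearMap.ker f)
    (hw : span R (range (f ∘ w)) = ⊤) : span R (range (Sum.elim v w)) = ⊤ := by
  rw [Sum.elim_range, span_union, hvker, sup_comm, ← comap_map_eq, map_span, ← range_comp, hw,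
    comap_top]

theorem mem_of_apply_mem_map {p q : Submodule R M} {x : M} (hpq : p ≤ q)
    (hker : LinearMap.ker f ≤ q) (hx : f x ∈ p.map f) : x ∈ q := by
  have hx' : x ∈ (p.map f).comap f := hx
  rw [comap_map_eq] at hx'
  exact sup_le hpq hker hx'

end SumSpan

def cellFamily {A Λ : Type*} {T : Λ → Type*} (c : ∀ l, T l → T l → A) :
    (Σ l, T l × T l) → A :=
  fun p => c p.1 p.2.1 p.2.2

section SumIndex

variable {ΛJ ΛH : Type*} {T : ΛJ ⊕ ΛH → Type*}

theorem cellFamily_comp_sumSigmaDistrib_symm {M : Type*} (c : ∀ l, T l → T l → M) :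
    cellFamily c ∘ (Equiv.sumSigmaDistrib _).symm =
      Sum.elim (cellFamily fun a => c (.inl a)) (cellFamily fun b => c (.inr b)) := by
  funext p
  rcases p with _ | _ <;> rfl

variable {R M N : Type*} [CommRing R] [AddCommGroup M] [Module R M] [AddCommGroup N]
  [Module R N] {c : ∀ l, T l → T l → M}

theorem linearIndependent_cellFamily_of_sum (f : M →ₗ[R] N)
    (hJ : LinearIndependent R (cellFamily fun a => c (.inl a)))
    (hker : span R (range (cellFamily fun a => c (.inl a))) = LinearMap.ker f)
    (hH : LinearIndependent R (f ∘ cellFamily fun b => c (.inr b))) :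
    LinearIndependent R (cellFamily c) := by
  rw [← linearIndependent_equiv (Equiv.sumSigmaDistrib _).symm,
    cellFamily_comp_sumSigmaDistrib_symm]
  exact hJ.sum_elim_of_span_eq_ker f hker hH

theorem span_cellFamily_eq_top_of_sum (f : M →ₗ[R] N)
    (hker : span R (range (cellFamily fun a => c (.inl a))) = LinearMap.ker f)
    (hH : span R (range (f ∘ cellFamily fun b => c (.inr b))) = ⊤) :
    span R (range (cellFamily c)) = ⊤ := by
  rw [← (Equiv.sumSigmaDistrib _).symm.surjective.range_comp,
    cellFamily_comp_sumSigmaDistrib_symm]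
  exact span_range_sum_elim_eq_top_of_span_eq_ker f hker hH

end SumIndex

section SumPO

variable {ΛJ ΛH : Type*} [PartialOrder ΛJ] [PartialOrder ΛH]

theorem sumPO_inl_lt_inl {a b : ΛJ} : (sumPO ΛJ ΛH).lt (.inl a) (.inl b) ↔ a < b :=
  lt_iff_le_not_ge.symm

theorem sumPO_inr_lt_inr {a b : ΛH} : (sumPO ΛJ ΛH).lt (.inr a) (.inr b) ↔ a < b :=
  lt_iff_le_not_ge.symm

theorem sumPO_inr_lt_inl (a : ΛH) (b : ΛJ) : (sumPO ΛJ ΛH).lt (.inr a) (.inl b) :=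
  ⟨trivial, id⟩

variable {R A H : Type*} [CommRing R] [Ring A] [Algebra R A] [Ring H] [Algebra R H]

theorem map_breve {Λ : Type*} [PartialOrder Λ] {T : Λ → Type*} (f : A →ₗ[R] H)
    (c : ∀ l, T l → T l → A) (l : Λ) :
    (breve R c l).map f = breve R (fun m s t => f (c m s t)) l := by
  rw [breve, breve, map_span]
  congr 1
  ext y
  simp [eq_comm]

variable {T : ΛJ ⊕ ΛH → Type*} {c : ∀ l, T l → T l → A}

theorem breve_inl_le_breve_sumPO (l : ΛJ) :
    letI := sumPO ΛJ ΛH; breve R (fun a => c (.inl a)) l ≤ breve R c (.inl l) := by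
  refine span_mono ?_
  rintro x ⟨m, s, t, hm, rfl⟩
  exact ⟨.inl m, s, t, sumPO_inl_lt_inl.mpr hm, rfl⟩

theorem breve_inr_le_breve_sumPO (l : ΛH) :
    letI := sumPO ΛJ ΛH; breve R (fun b => c (.inr b)) l ≤ breve R c (.inr l) := by
  refine span_mono ?_
  rintro x ⟨m, s, t, hm, rfl⟩
  exact ⟨.inr m, s, t, sumPO_inr_lt_inr.mpr hm, rfl⟩

theorem span_cellFamily_inl_le_breve_sumPO (l : ΛH) :
    letI := sumPO ΛJ ΛH
    span R (range (cellFamily fun a => c (.inl a))) ≤ breve R c (.inr l) := by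
  refine span_le.mpr ?_
  rintro x ⟨p, rfl⟩
  exact subset_span ⟨.inl p.1, p.2.1, p.2.2, sumPO_inr_lt_inl l p.1, rfl⟩

theorem mem_breve_sumPO_inr_of_map_mem (π : A →ₐ[R] H)
    (hker : span R (range (cellFamily fun a => c (.inl a))) = LinearMap.ker π.toLinearMap)
    {l : ΛH} {x : A} (hx : π x ∈ breve R (fun b s t => π (c (.inr b) s t)) l) :
    letI := sumPO ΛJ ΛH; x ∈ breve R c (.inr l) :=
  mem_of_apply_mem_map π.toLinearMap (breve_inr_le_breve_sumPO l)
    (hker ▸ span_cellFamily_inl_le_breve_sumPO l) (by rwa [map_breve])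

theorem IsCellularIdealDatum.isCellDatum_sumPO {σ : A →ₗ[R] A} {J : Submodule R A}
    {ft : ∀ l, Fintype (T l)}
    (hcJ : IsCellularIdealDatum R A σ J ΛJ (fun a => T (.inl a)) (fun a => ft (.inl a))
      fun a => c (.inl a))
    {π : A →ₐ[R] H} (hker : ∀ x : A, π x = 0 ↔ x ∈ J) {τ : H →ₗ[R] H}
    (hcompat : ∀ x : A, τ (π x) = π (σ x))
    (hcH : IsCellDatum R H τ ΛH (fun b => T (.inr b)) (fun b => ft (.inr b))
      fun b s t => π (c (.inr b) s t)) :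
    letI := sumPO ΛJ ΛH; IsCellDatum R A σ (ΛJ ⊕ ΛH) T ft c := by
  obtain ⟨hindJ, hspanJ, hmulJ, hinvJ⟩ := hcJ
  obtain ⟨hindH, hspanH, hmulH, hinvH⟩ := hcH
  have hkerJ :
      span R (range (cellFamily fun a => c (.inl a))) = LinearMap.ker π.toLinearMap := by
    ext x
    exact hspanJ ▸ (hker x).symm
  refine ⟨linearIndependent_cellFamily_of_sum π.toLinearMap hindJ hkerJ hindH,
    span_cellFamily_eq_top_of_sum π.toLinearMap hkerJ hspanH, ?_, ?_⟩
  · rintro (l | l) s a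
    · obtain ⟨rc, hrc⟩ := hmulJ l s a
      exact ⟨rc, fun t => breve_inl_le_breve_sumPO l (hrc t)⟩
    · obtain ⟨rc, hrc⟩ := hmulH l s (π a)
      refine ⟨rc, fun t => mem_breve_sumPO_inr_of_map_mem π hkerJ ?_⟩
      simpa only [map_sub, map_mul, map_sum, map_smul] using hrc t
  · rintro (l | l) s t
    · exact breve_inl_le_breve_sumPO l (hinvJ l s t)
    · refine mem_breve_sumPO_inr_of_map_mem π hkerJ ?_
      simpa only [map_sub, hcompat] using hinvH l s t

end SumPO

theorem stmt14 (R A H : Type*) [CommRing R] [Ring A] [Algebra R A]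
    [Ring H] [Algebra R H]
    (σ : A →ₗ[R] A)
    (J : Submodule R A)
    (π : A →ₐ[R] H) (hπ : Function.Surjective π)
    (hker : ∀ x : A, π x = 0 ↔ x ∈ J)
    (τ : H →ₗ[R] H)
    (hcompat : ∀ x : A, τ (π x) = π (σ x))
    (ΛJ : Type*) [PartialOrder ΛJ] (TJ : ΛJ → Type w) (ftJ : ∀ l, Fintype (TJ l))
    (cJ : ∀ l, TJ l → TJ l → A)
    (hcJ : IsCellularIdealDatum R A σ J ΛJ TJ ftJ cJ)
    (ΛH : Type*) [PartialOrder ΛH] (TH : ΛH → Type w) (ftH : ∀ l, Fintype (TH l))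
    (cH : ∀ l, TH l → TH l → H)
    (hcH : IsCellDatum R H τ ΛH TH ftH cH) :
    ∃ ch : ∀ l, TH l → TH l → A,
      (∀ l s t, π (ch l s t) = cH l s t) ∧
      (letI : PartialOrder (ΛJ ⊕ ΛH) := sumPO ΛJ ΛH
       IsCellDatum R A σ (ΛJ ⊕ ΛH)
        (fun l => match l with
          | .inl a => TJ a
          | .inr b => TH b)
        (fun l => match l with
          | .inl a => ftJ a
          | .inr b => ftH b)
        (fun l => match l with
          | .inl a => cJ a
          | .inr b => ch b)) := by
  choose ch hch using fun l (s t : TH l) => hπ (cH l s t)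
  obtain rfl : cH = fun l s t => π (ch l s t) := by
    funext l s t
    exact (hch l s t).symm
  exact ⟨ch, hch, hcJ.isCellDatum_sumPO hker hcompat hcH⟩
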